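/- arXiv:1410.4686 — 9 statements merged into one kernel-verified Lean document; each statement's English description precedes it below -/
import Mathlib

section
/- Define h : P^n → P^{n−1} by h(p,q) := (x ⊗ (∫₀¹ q) − ∫₀ˣ q, 0); this pair indeed lies in P^{n−1} since its first component evaluates to 0 ∈ I^{n−1} at x = 0 and to 0 ∈ F^{n−1} at x = 1. Then h is a chain homotopy between s ∘ ev and the identity: for every n and every (p,q) ∈ P^n, d(h(p,q)) + h(d(p,q)) = s(ev(p,q)) − (p,q). -/
/-!
Setup: `(V, d)` is a cochain complex of `ℚ`-vector spaces indexed by `ℤ`, with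
subcomplexes `I, F ⊆ V`.  We model the graded pieces as submodules `V n, I n, F n`
of one ambient `ℚ`-vector space `A`, with one differential `d : A →ₗ[ℚ] A` that maps
`V n` into `V (n+1)` (and similarly for `I`, `F`).

Polynomials `ℚ[x] ⊗ V` with coefficients in `A` are modelled as finitely supported
functions `ℕ →₀ A`, where `p i` is the coefficient of `xⁱ`.
-/

variable {A : Type*} [AddCommGroup A] [Module ℚ A]

/-- Evaluation at `ε : ℚ` of a polynomial `∑ i, xⁱ ⊗ vᵢ`. -/
noncomputable def evalAt (ε : ℚ) : (ℕ →₀ A) →ₗ[ℚ] A :=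
  Finsupp.lsum ℚ fun i : ℕ => ε ^ i • (LinearMap.id : A →ₗ[ℚ] A)

/-- Formal derivative `∂ₓ` in the polynomial variable `x`. -/
noncomputable def polyDeriv : (ℕ →₀ A) →ₗ[ℚ] (ℕ →₀ A) :=
  Finsupp.lsum ℚ fun i : ℕ =>
    (Finsupp.lsingle (R := ℚ) (i - 1)).comp ((i : ℚ) • (LinearMap.id : A →ₗ[ℚ] A))

/-- Apply a linear map `d` to all coefficients (this is `d_V`). -/
noncomputable def coeffMap (d : A →ₗ[ℚ] A) : (ℕ →₀ A) →ₗ[ℚ] (ℕ →₀ A) :=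
  Finsupp.mapRange.linearMap d

/-- `∫₀¹ q := ∑ i, vᵢ / (i+1)`. -/
noncomputable def int01 : (ℕ →₀ A) →ₗ[ℚ] A :=
  Finsupp.lsum ℚ fun i : ℕ => ((i : ℚ) + 1)⁻¹ • (LinearMap.id : A →ₗ[ℚ] A)

/-- `∫₀ˣ q := ∑ i, x^(i+1)/(i+1) ⊗ vᵢ`. -/
noncomputable def int0x : (ℕ →₀ A) →ₗ[ℚ] (ℕ →₀ A) :=
  Finsupp.lsum ℚ fun i : ℕ =>
    (Finsupp.lsingle (R := ℚ) (i + 1)).comp (((i : ℚ) + 1)⁻¹ • (LinearMap.id : A →ₗ[ℚ] A))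

/-- Membership in degree `n` of the Deligne cone complex `Cⁿ = Iⁿ ⊕ Fⁿ ⊕ V^(n-1)`. -/
def MemC (I F V : ℤ → Submodule ℚ A) (n : ℤ) (x : A × A × A) : Prop :=
  x.1 ∈ I n ∧ x.2.1 ∈ F n ∧ x.2.2 ∈ V (n - 1)

/-- Membership in degree `n` of the Deligne path complex `Pⁿ`: a pair `(p, q)` with
`p ∈ ℚ[x] ⊗ Vⁿ`, `q ∈ ℚ[x] ⊗ V^(n-1)`, `p(0) ∈ Iⁿ` and `p(1) ∈ Fⁿ`. -/
def MemP (I F V : ℤ → Submodule ℚ A) (n : ℤ) (w : (ℕ →₀ A) × (ℕ →₀ A)) : Prop :=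
  (∀ i, w.1 i ∈ V n) ∧ (∀ i, w.2 i ∈ V (n - 1)) ∧
    evalAt 0 w.1 ∈ I n ∧ evalAt 1 w.1 ∈ F n

/-- Differential of the cone complex: `d (a, b, c) = (d a, d b, b - a - d c)`. -/
noncomputable def dCone (d : A →ₗ[ℚ] A) (x : A × A × A) : A × A × A :=
  (d x.1, d x.2.1, x.2.1 - x.1 - d x.2.2)

/-- Differential of the path complex: `d (p, q) = (d_V p, ∂ₓ p - d_V q)`. -/
noncomputable def dPath (d : A →ₗ[ℚ] A) (w : (ℕ →₀ A) × (ℕ →₀ A)) : (ℕ →₀ A) × (ℕ →₀ A) :=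
  (coeffMap d w.1, polyDeriv w.1 - coeffMap d w.2)

/-- The evaluation map `ev (p, q) = (p(0), p(1), ∫₀¹ q)`. -/
noncomputable def evMap : (ℕ →₀ A) × (ℕ →₀ A) → A × A × A :=
  fun w => (evalAt 0 w.1, evalAt 1 w.1, int01 w.2)

/-- The splitting `s (a, b, c) = ((1-x) ⊗ a + x ⊗ b, 1 ⊗ c)`. -/
noncomputable def sMap : A × A × A → (ℕ →₀ A) × (ℕ →₀ A) :=
  fun x => (Finsupp.single 0 x.1 + Finsupp.single 1 (x.2.1 - x.1), Finsupp.single 0 x.2.2)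

/-- The homotopy `h (p, q) := (x ⊗ (∫₀¹ q) - ∫₀ˣ q, 0)`. -/
noncomputable def hMap : (ℕ →₀ A) × (ℕ →₀ A) → (ℕ →₀ A) × (ℕ →₀ A) :=
  fun w => (Finsupp.single 1 (int01 w.2) - int0x w.2, 0)

/-!
The homotopy formula is the fundamental theorem of calculus for polynomial forms on `[0,1]`:
`∂ₓ ∫₀ˣ q = q` and `∫₀ˣ ∂ₓ p = p - p(0)`, together with the fact that `d_V` commutes with both
integrals. On the `dx`-free part, `d_V (h w) + h (d w)` collapses to
`x ⊗ (p(1) - p(0)) - (p - p(0))`, and on the `dx`-part to `∫₀¹ q - q`.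
-/

@[simp]
lemma evalAt_single (ε : ℚ) (i : ℕ) (v : A) : evalAt ε (Finsupp.single i v) = ε ^ i • v := by
  simp [evalAt]

@[simp]
lemma int01_single (i : ℕ) (v : A) : int01 (Finsupp.single i v) = ((i : ℚ) + 1)⁻¹ • v := by
  simp [int01]

@[simp]
lemma int0x_single (i : ℕ) (v : A) :
    int0x (Finsupp.single i v) = Finsupp.single (i + 1) (((i : ℚ) + 1)⁻¹ • v) := by
  simp [int0x]

@[simp]
lemma polyDeriv_single (i : ℕ) (v : A) :
    polyDeriv (Finsupp.single i v) = Finsupp.single (i - 1) ((i : ℚ) • v) := by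
  simp [polyDeriv]

@[simp]
lemma coeffMap_single (d : A →ₗ[ℚ] A) (i : ℕ) (v : A) :
    coeffMap d (Finsupp.single i v) = Finsupp.single i (d v) := by
  simp [coeffMap]

lemma evalAt_zero_int0x (q : ℕ →₀ A) : evalAt 0 (int0x q) = 0 := by
  suffices evalAt 0 ∘ₗ int0x = (0 : (ℕ →₀ A) →ₗ[ℚ] A) from LinearMap.congr_fun this q
  ext i v
  simp

lemma evalAt_one_int0x (q : ℕ →₀ A) : evalAt 1 (int0x q) = int01 q := by
  suffices evalAt 1 ∘ₗ int0x = (int01 : (ℕ →₀ A) →ₗ[ℚ] A) from LinearMap.congr_fun this q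
  ext i v
  simp

lemma polyDeriv_int0x (q : ℕ →₀ A) : polyDeriv (int0x q) = q := by
  suffices polyDeriv ∘ₗ int0x = (LinearMap.id : (ℕ →₀ A) →ₗ[ℚ] _) from
    LinearMap.congr_fun this q
  ext i v
  have hi : (i : ℚ) + 1 ≠ 0 := by positivity
  simp [smul_smul, hi]

lemma int01_polyDeriv (p : ℕ →₀ A) : int01 (polyDeriv p) = evalAt 1 p - evalAt 0 p := by
  suffices int01 ∘ₗ polyDeriv = (evalAt 1 - evalAt 0 : (ℕ →₀ A) →ₗ[ℚ] A) from
    LinearMap.congr_fun this p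
  ext i v
  rcases i with _ | j
  · simp
  · have hj : (j : ℚ) + 1 ≠ 0 := by positivity
    simp [smul_smul, hj]

lemma int0x_polyDeriv (p : ℕ →₀ A) :
    int0x (polyDeriv p) = p - Finsupp.single 0 (evalAt 0 p) := by
  suffices int0x ∘ₗ polyDeriv =
      (LinearMap.id - Finsupp.lsingle 0 ∘ₗ evalAt 0 : (ℕ →₀ A) →ₗ[ℚ] _) from
    LinearMap.congr_fun this p
  ext i v
  rcases i with _ | j
  · simp
  · have hj : (j : ℚ) + 1 ≠ 0 := by positivity
    simp [smul_smul, hj]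

lemma coeffMap_int0x (d : A →ₗ[ℚ] A) (q : ℕ →₀ A) :
    coeffMap d (int0x q) = int0x (coeffMap d q) := by
  suffices coeffMap d ∘ₗ int0x = int0x ∘ₗ coeffMap d from LinearMap.congr_fun this q
  ext i v
  simp

lemma map_int01 (d : A →ₗ[ℚ] A) (q : ℕ →₀ A) : d (int01 q) = int01 (coeffMap d q) := by
  suffices d ∘ₗ int01 = int01 ∘ₗ coeffMap d from LinearMap.congr_fun this q
  ext i v
  simp

section Membership

variable {S : Submodule ℚ A} {q : ℕ →₀ A}

lemma int01_mem (h : ∀ i, q i ∈ S) : int01 q ∈ S :=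
  Submodule.sum_mem _ fun i _ => Submodule.smul_mem _ _ (h i)

lemma int0x_apply_mem (h : ∀ i, q i ∈ S) (j : ℕ) : int0x q j ∈ S := by
  rw [int0x, Finsupp.lsum_apply, Finsupp.sum, Finsupp.finsetSum_apply]
  refine Submodule.sum_mem _ fun i _ => ?_
  rw [LinearMap.comp_apply, Finsupp.lsingle_apply, Finsupp.single_apply]
  split
  · exact Submodule.smul_mem _ _ (h i)
  · exact zero_mem _

end Membership

lemma evalAt_zero_hMap (w : (ℕ →₀ A) × (ℕ →₀ A)) : evalAt 0 (hMap w).1 = 0 := by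
  simp [hMap, evalAt_zero_int0x]

lemma evalAt_one_hMap (w : (ℕ →₀ A) × (ℕ →₀ A)) : evalAt 1 (hMap w).1 = 0 := by
  simp [hMap, evalAt_one_int0x]

lemma memP_hMap {V I F : ℤ → Submodule ℚ A} {n : ℤ} {w : (ℕ →₀ A) × (ℕ →₀ A)}
    (hw : ∀ i, w.2 i ∈ V (n - 1)) : MemP I F V (n - 1) (hMap w) := by
  refine ⟨fun i => ?_, fun _ => zero_mem _, ?_, ?_⟩
  · simp only [hMap, Finsupp.sub_apply]
    refine sub_mem ?_ (int0x_apply_mem hw i)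
    rw [Finsupp.single_apply]
    split
    · exact int01_mem hw
    · exact zero_mem _
  · rw [evalAt_zero_hMap]; exact zero_mem _
  · rw [evalAt_one_hMap]; exact zero_mem _

lemma dPath_hMap_add_hMap_dPath (d : A →ₗ[ℚ] A) (w : (ℕ →₀ A) × (ℕ →₀ A)) :
    dPath d (hMap w) + hMap (dPath d w) = sMap (evMap w) - w := by
  obtain ⟨p, q⟩ := w
  simp only [dPath, hMap, sMap, evMap, Prod.mk_add_mk, Prod.mk_sub_mk, Prod.ext_iff]
  constructor
  · simp only [map_sub, coeffMap_single, coeffMap_int0x, map_int01, int01_polyDeriv,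
      int0x_polyDeriv, Finsupp.single_sub]
    abel
  · simp only [map_sub, map_zero, polyDeriv_single, polyDeriv_int0x, Nat.cast_one, one_smul]
    abel

theorem h_is_homotopy_general
    (V I F : ℤ → Submodule ℚ A) (d : A →ₗ[ℚ] A) :
    ∀ (n : ℤ) (w : (ℕ →₀ A) × (ℕ →₀ A)), MemP I F V n w →
      (evalAt 0 (hMap w).1 = 0 ∧ evalAt 1 (hMap w).1 = 0 ∧ MemP I F V (n - 1) (hMap w)) ∧
      dPath d (hMap w) + hMap (dPath d w) = sMap (evMap w) - w :=
  fun _ w hw =>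
    ⟨⟨evalAt_zero_hMap w, evalAt_one_hMap w, memP_hMap hw.2.1⟩, dPath_hMap_add_hMap_dPath d w⟩

/-- `h` maps `Pⁿ` into `P^(n-1)` (its first component evaluates to
`0 ∈ I^(n-1)` at `x = 0` and to `0 ∈ F^(n-1)` at `x = 1`), and `h` is a chain homotopy
between `s ∘ ev` and the identity: `d(h w) + h(d w) = s(ev w) - w`. -/
theorem h_is_homotopy
    (V I F : ℤ → Submodule ℚ A) (d : A →ₗ[ℚ] A)
    (hd2 : ∀ a : A, d (d a) = 0)
    (hIV : ∀ n, I n ≤ V n) (hFV : ∀ n, F n ≤ V n)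
    (hdV : ∀ n, ∀ a ∈ V n, d a ∈ V (n + 1))
    (hdI : ∀ n, ∀ a ∈ I n, d a ∈ I (n + 1))
    (hdF : ∀ n, ∀ a ∈ F n, d a ∈ F (n + 1)) :
    ∀ (n : ℤ) (w : (ℕ →₀ A) × (ℕ →₀ A)), MemP I F V n w →
      (evalAt 0 (hMap w).1 = 0 ∧ evalAt 1 (hMap w).1 = 0 ∧ MemP I F V (n - 1) (hMap w)) ∧
      dPath d (hMap w) + hMap (dPath d w) = sMap (evMap w) - w :=
  h_is_homotopy_general V I F d
end

section
/- The evaluation map ev is a quasi-isomorphism: for every n ∈ ℤ, the induced ℚ-linear map on cohomology, from ker(d : P^n → P^{n+1})/im(d : P^{n−1} → P^n) to ker(d : C^n → C^{n+1})/im(d : C^{n−1} → C^n), is bijective. -/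
/-!
Setup: `(V, d)` is a cochain complex of `ℚ`-vector spaces indexed by `ℤ`, with
subcomplexes `I, F ⊆ V`.  We model the graded pieces as submodules `V n, I n, F n`
of one ambient `ℚ`-vector space `A`, with one differential `d : A →ₗ[ℚ] A` that maps
`V n` into `V (n+1)` (and similarly for `I`, `F`).

Polynomials `ℚ[x] ⊗ V` with coefficients in `A` are modelled as finitely supported
functions `ℕ →₀ A`, where `p i` is the coefficient of `xⁱ`.
-/

variable {A : Type*} [AddCommGroup A] [Module ℚ A]

lemma evalAt_coeffMap (ε : ℚ) (d : A →ₗ[ℚ] A) (p : ℕ →₀ A) :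
    evalAt ε (coeffMap d p) = d (evalAt ε p) := by
  induction p using Finsupp.induction_linear with
  | zero => simp
  | add f g hf hg => simp [hf, hg]
  | single i v => simp

lemma int0x_coeffMap (d : A →ₗ[ℚ] A) (q : ℕ →₀ A) :
    int0x (coeffMap d q) = coeffMap d (int0x q) := by
  induction q using Finsupp.induction_linear with
  | zero => simp
  | add f g hf hg => simp [hf, hg]
  | single i v => simp

lemma int01_coeffMap (d : A →ₗ[ℚ] A) (q : ℕ →₀ A) : int01 (coeffMap d q) = d (int01 q) := by
  rw [← evalAt_one_int0x, int0x_coeffMap, evalAt_coeffMap, evalAt_one_int0x]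

lemma int0x_apply_zero (q : ℕ →₀ A) : int0x q 0 = 0 := by
  induction q using Finsupp.induction_linear with
  | zero => simp
  | add f g hf hg => simp [hf, hg]
  | single i v => simp

lemma int0x_apply_succ (q : ℕ →₀ A) (i : ℕ) : int0x q (i + 1) = ((i : ℚ) + 1)⁻¹ • q i := by
  induction q using Finsupp.induction_linear with
  | zero => simp
  | add f g hf hg => simp [hf, hg]
  | single j v =>
    rcases eq_or_ne j i with rfl | hji
    · simp
    · simp [hji]

section Coefficients

variable (W : Submodule ℚ A)

lemma single_apply_mem {v : A} (hv : v ∈ W) (j i : ℕ) : Finsupp.single j v i ∈ W := by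
  rw [Finsupp.single_apply]
  split_ifs
  exacts [hv, W.zero_mem]

lemma evalAt_mem {p : ℕ →₀ A} (hp : ∀ i, p i ∈ W) (ε : ℚ) : evalAt ε p ∈ W := by
  rw [evalAt, Finsupp.lsum_apply]
  exact Submodule.finsuppSum_mem _ _ _ _ fun i _ => W.smul_mem _ (hp i)

lemma int0x_apply_mem_s3 {q : ℕ →₀ A} (hq : ∀ i, q i ∈ W) : ∀ i, int0x q i ∈ W
  | 0 => int0x_apply_zero q ▸ W.zero_mem
  | i + 1 => int0x_apply_succ q i ▸ W.smul_mem _ (hq i)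

lemma int01_mem_s3 {q : ℕ →₀ A} (hq : ∀ i, q i ∈ W) : int01 q ∈ W :=
  evalAt_one_int0x q ▸ evalAt_mem W (int0x_apply_mem_s3 W hq) 1

end Coefficients

noncomputable def relPrimitive : (ℕ →₀ A) →ₗ[ℚ] (ℕ →₀ A) :=
  int0x - (Finsupp.lsingle 1).comp int01

lemma relPrimitive_apply (q : ℕ →₀ A) :
    relPrimitive q = int0x q - Finsupp.single 1 (int01 q) := rfl

@[simp] lemma evalAt_zero_relPrimitive (q : ℕ →₀ A) : evalAt 0 (relPrimitive q) = 0 := by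
  simp [relPrimitive_apply, evalAt_zero_int0x]

@[simp] lemma evalAt_one_relPrimitive (q : ℕ →₀ A) : evalAt 1 (relPrimitive q) = 0 := by
  simp [relPrimitive_apply, evalAt_one_int0x]

lemma polyDeriv_relPrimitive (q : ℕ →₀ A) :
    polyDeriv (relPrimitive q) = q - Finsupp.single 0 (int01 q) := by
  simp [relPrimitive_apply, polyDeriv_int0x]

lemma relPrimitive_coeffMap (d : A →ₗ[ℚ] A) (q : ℕ →₀ A) :
    relPrimitive (coeffMap d q) = coeffMap d (relPrimitive q) := by
  simp [relPrimitive_apply, int0x_coeffMap, int01_coeffMap]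

lemma relPrimitive_polyDeriv (p : ℕ →₀ A) :
    relPrimitive (polyDeriv p) =
      p - Finsupp.single 0 (evalAt 0 p) - Finsupp.single 1 (evalAt 1 p - evalAt 0 p) := by
  rw [relPrimitive_apply, int0x_polyDeriv, int01_polyDeriv]

lemma relPrimitive_apply_mem (W : Submodule ℚ A) {q : ℕ →₀ A} (hq : ∀ i, q i ∈ W) (i : ℕ) :
    relPrimitive q i ∈ W :=
  W.sub_mem (int0x_apply_mem_s3 W hq i) (single_apply_mem W (int01_mem_s3 W hq) 1 i)

noncomputable def pathHomotopy (x : (ℕ →₀ A) × (ℕ →₀ A)) : (ℕ →₀ A) × (ℕ →₀ A) :=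
  (relPrimitive x.2, 0)

@[simp] lemma pathHomotopy_zero : pathHomotopy (0 : (ℕ →₀ A) × (ℕ →₀ A)) = 0 := by
  simp [pathHomotopy]

@[simp] lemma dCone_zero (d : A →ₗ[ℚ] A) : dCone d 0 = 0 := by
  simp [dCone]

lemma dPath_add (d : A →ₗ[ℚ] A) (x y : (ℕ →₀ A) × (ℕ →₀ A)) :
    dPath d (x + y) = dPath d x + dPath d y := by
  simp only [dPath, Prod.fst_add, Prod.snd_add, map_add, Prod.mk_add_mk]
  congr 1
  abel

lemma evMap_sMap (y : A × A × A) : evMap (sMap y) = y := by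
  simp [evMap, sMap]

lemma dPath_sMap (d : A →ₗ[ℚ] A) (y : A × A × A) : dPath d (sMap y) = sMap (dCone d y) := by
  simp [dPath, sMap, dCone, map_sub]

lemma dPath_pathHomotopy_add_pathHomotopy_dPath (d : A →ₗ[ℚ] A) (x : (ℕ →₀ A) × (ℕ →₀ A)) :
    dPath d (pathHomotopy x) + pathHomotopy (dPath d x) = x - sMap (evMap x) := by
  ext1
  · simp only [dPath, pathHomotopy, evMap, sMap, Prod.fst_add, Prod.fst_sub, map_sub,
      relPrimitive_coeffMap, relPrimitive_polyDeriv]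
    abel
  · simp [dPath, pathHomotopy, evMap, sMap, polyDeriv_relPrimitive]

section Membership

variable {I F V : ℤ → Submodule ℚ A} {n : ℤ}

lemma MemP.add {x y : (ℕ →₀ A) × (ℕ →₀ A)} (hx : MemP I F V n x) (hy : MemP I F V n y) :
    MemP I F V n (x + y) := by
  obtain ⟨hxp, hxq, hx0, hx1⟩ := hx
  obtain ⟨hyp, hyq, hy0, hy1⟩ := hy
  refine ⟨fun i => (V n).add_mem (hxp i) (hyp i), fun i => (V _).add_mem (hxq i) (hyq i), ?_, ?_⟩
  · simpa only [Prod.fst_add, map_add] using (I n).add_mem hx0 hy0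
  · simpa only [Prod.fst_add, map_add] using (F n).add_mem hx1 hy1

lemma memC_zero : MemC I F V n 0 :=
  ⟨(I n).zero_mem, (F n).zero_mem, (V _).zero_mem⟩

lemma memP_sMap (hIV : I n ≤ V n) (hFV : F n ≤ V n) {y : A × A × A} (hy : MemC I F V n y) :
    MemP I F V n (sMap y) := by
  obtain ⟨ha, hb, hc⟩ := hy
  refine ⟨fun i => (V n).add_mem (single_apply_mem _ (hIV ha) _ _)
    (single_apply_mem _ ((V n).sub_mem (hFV hb) (hIV ha)) _ _),
    single_apply_mem _ hc _, ?_, ?_⟩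
  · simpa [sMap] using ha
  · simpa [sMap] using hb

lemma memP_pathHomotopy {x : (ℕ →₀ A) × (ℕ →₀ A)} (hx : MemP I F V n x) :
    MemP I F V (n - 1) (pathHomotopy x) := by
  refine ⟨relPrimitive_apply_mem _ hx.2.1, fun _ => (V _).zero_mem, ?_, ?_⟩ <;>
    simp [pathHomotopy]

end Membership

theorem ev_is_quasiIso_general
    (V I F : ℤ → Submodule ℚ A) (d : A →ₗ[ℚ] A)
    (hIV : ∀ n, I n ≤ V n) (hFV : ∀ n, F n ≤ V n) :
    ∀ n : ℤ,
      (∀ y : A × A × A, MemC I F V n y → dCone d y = 0 →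
        ∃ x : (ℕ →₀ A) × (ℕ →₀ A), MemP I F V n x ∧ dPath d x = 0 ∧
          ∃ w : A × A × A, MemC I F V (n - 1) w ∧ evMap x - y = dCone d w) ∧
      (∀ x : (ℕ →₀ A) × (ℕ →₀ A), MemP I F V n x → dPath d x = 0 →
        (∃ w : A × A × A, MemC I F V (n - 1) w ∧ evMap x = dCone d w) →
        ∃ u : (ℕ →₀ A) × (ℕ →₀ A), MemP I F V (n - 1) u ∧ x = dPath d u) := by
  intro n
  constructor
  · intro y hy hdy
    refine ⟨sMap y, memP_sMap (hIV n) (hFV n) hy, ?_, 0, memC_zero, ?_⟩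
    · rw [dPath_sMap, hdy]
      simp [sMap]
    · rw [evMap_sMap, sub_self, dCone_zero]
  · rintro x hx hdx ⟨w, hw, hev⟩
    refine ⟨sMap w + pathHomotopy x, (memP_sMap (hIV _) (hFV _) hw).add (memP_pathHomotopy hx), ?_⟩
    have homotopy := dPath_pathHomotopy_add_pathHomotopy_dPath d x
    rw [hdx, pathHomotopy_zero, add_zero, hev, ← dPath_sMap] at homotopy
    rw [dPath_add, homotopy, add_sub_cancel]

/-- The evaluation map `ev` is a quasi-isomorphism: for every `n : ℤ`
the induced map on `n`-th cohomology, `ker d / im d` of `P` to `ker d / im d` of `C`, is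
bijective.  Surjectivity: every cocycle of `Cⁿ` differs from the value of a cocycle of
`Pⁿ` by a coboundary.  Injectivity: a cocycle of `Pⁿ` whose value is a coboundary is
itself a coboundary. -/
theorem ev_is_quasiIso
    (V I F : ℤ → Submodule ℚ A) (d : A →ₗ[ℚ] A)
    (hd2 : ∀ a : A, d (d a) = 0)
    (hIV : ∀ n, I n ≤ V n) (hFV : ∀ n, F n ≤ V n)
    (hdV : ∀ n, ∀ a ∈ V n, d a ∈ V (n + 1))
    (hdI : ∀ n, ∀ a ∈ I n, d a ∈ I (n + 1))
    (hdF : ∀ n, ∀ a ∈ F n, d a ∈ F (n + 1)) :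
    ∀ n : ℤ,
      (∀ y : A × A × A, MemC I F V n y → dCone d y = 0 →
        ∃ x : (ℕ →₀ A) × (ℕ →₀ A), MemP I F V n x ∧ dPath d x = 0 ∧
          ∃ w : A × A × A, MemC I F V (n - 1) w ∧ evMap x - y = dCone d w) ∧
      (∀ x : (ℕ →₀ A) × (ℕ →₀ A), MemP I F V n x → dPath d x = 0 →
        (∃ w : A × A × A, MemC I F V (n - 1) w ∧ evMap x = dCone d w) →
        ∃ u : (ℕ →₀ A) × (ℕ →₀ A), MemP I F V (n - 1) u ∧ x = dPath d u) :=
  ev_is_quasiIso_general V I F d hIV hFV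
end

section
/- For every α ∈ ℚ, Beilinson's product ∪_α on the Deligne cone complex satisfies the Leibniz rule with respect to the cone differential: for all x ∈ C^r and y ∈ C^s, d(x ∪_α y) = (dx) ∪_α y + (−1)^r x ∪_α (dy) in C^{r+s+1}. -/
/-!
Setup: `(V, d)` is a cochain complex of `ℚ`-vector spaces indexed by `ℤ`, with
subcomplexes `I, F ⊆ V`.  We model the graded pieces as submodules `V n, I n, F n`
of one ambient `ℚ`-vector space `A`, with one differential `d : A →ₗ[ℚ] A` that maps
`V n` into `V (n+1)` (and similarly for `I`, `F`).

Polynomials `ℚ[x] ⊗ V` with coefficients in `A` are modelled as finitely supported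
functions `ℕ →₀ A`, where `p i` is the coefficient of `xⁱ`.
-/

variable {A : Type*} [AddCommGroup A] [Module ℚ A]

/-- Beilinson's product `∪_α` on the Deligne cone complex; `r` is the (cohomological)
degree of the first factor.  `μ` is the graded product of the underlying complex `V`. -/
noncomputable def cup (μ : A →ₗ[ℚ] A →ₗ[ℚ] A) (α : ℚ) (r : ℤ) (x y : A × A × A) :
    A × A × A :=
  (μ x.1 y.1, μ x.2.1 y.2.1,
    ((1 - α) * (-1 : ℚ) ^ r) • μ x.1 y.2.2 + (α * (-1 : ℚ) ^ r) • μ x.2.1 y.2.2 +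
      α • μ x.2.2 y.1 + (1 - α) • μ x.2.2 y.2.1)

/-! The first two components are the Leibniz rule of `μ` itself. In the third, expanding `d` by
the Leibniz rule makes both sides linear combinations of products `μ u v` with coefficients
polynomial in `α` and `(-1) ^ r`; the mixed terms cancel pairwise, both sides reducing to
`μ x.2.1 y.2.1 - μ x.1 y.1`, once `(-1) ^ r` is specialised to `1` or `-1`. -/

theorem neg_one_zpow_eq_or (R : Type*) [DivisionMonoid R] [HasDistribNeg R] (n : ℤ) :
    (-1 : R) ^ n = 1 ∨ (-1 : R) ^ n = -1 := by
  rcases Int.even_or_odd n with hn | hn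
  exacts [.inl hn.neg_one_zpow, .inr hn.neg_one_zpow]

theorem dCone_cup_of_leibniz (μ : A →ₗ[ℚ] A →ₗ[ℚ] A) (d : A →ₗ[ℚ] A) (α : ℚ) {r : ℤ}
    {x : A × A × A}
    (h₁ : ∀ v, d (μ x.1 v) = μ (d x.1) v + (-1 : ℚ) ^ r • μ x.1 (d v))
    (h₂ : ∀ v, d (μ x.2.1 v) = μ (d x.2.1) v + (-1 : ℚ) ^ r • μ x.2.1 (d v))
    (h₃ : ∀ v, d (μ x.2.2 v) = μ (d x.2.2) v + (-1 : ℚ) ^ (r - 1) • μ x.2.2 (d v))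
    (y : A × A × A) :
    dCone d (cup μ α r x y) =
      cup μ α (r + 1) (dCone d x) y + (-1 : ℚ) ^ r • cup μ α r x (dCone d y) := by
  rw [zpow_sub_one₀ (by norm_num)] at h₃
  simp only [dCone, cup, map_add, map_sub, map_smul, LinearMap.sub_apply, h₁, h₂, h₃,
    Prod.smul_mk, Prod.mk_add_mk, Prod.mk.injEq, true_and]
  rw [zpow_add_one₀ (by norm_num)]
  rcases neg_one_zpow_eq_or ℚ r with hsign | hsign <;>
  · rw [hsign]
    module

theorem cup_leibniz_general
    (V I F : ℤ → Submodule ℚ A) (d : A →ₗ[ℚ] A) (μ : A →ₗ[ℚ] A →ₗ[ℚ] A)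
    (hIV : ∀ n, I n ≤ V n) (hFV : ∀ n, F n ≤ V n)
    (hLeib : ∀ (r : ℤ), ∀ u ∈ V r, ∀ v : A,
      d (μ u v) = μ (d u) v + ((-1 : ℚ) ^ r) • μ u (d v)) :
    ∀ (α : ℚ) (r s : ℤ) (x y : A × A × A), MemC I F V r x → MemC I F V s y →
      dCone d (cup μ α r x y) =
        cup μ α (r + 1) (dCone d x) y + ((-1 : ℚ) ^ r) • cup μ α r x (dCone d y) := by
  intro α r s x y hx _
  exact dCone_cup_of_leibniz μ d α (hLeib r _ (hIV r hx.1)) (hLeib r _ (hFV r hx.2.1))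
    (hLeib (r - 1) _ hx.2.2) y

/-- For every `α : ℚ`, Beilinson's product `∪_α` satisfies the Leibniz
rule with respect to the cone differential:
`d(x ∪_α y) = (d x) ∪_α y + (-1)^r • (x ∪_α (d y))` for `x ∈ C^r`, `y ∈ C^s`. -/
theorem cup_leibniz
    (V I F : ℤ → Submodule ℚ A) (d : A →ₗ[ℚ] A) (μ : A →ₗ[ℚ] A →ₗ[ℚ] A)
    (hd2 : ∀ a : A, d (d a) = 0)
    (hIV : ∀ n, I n ≤ V n) (hFV : ∀ n, F n ≤ V n)
    (hdV : ∀ n, ∀ a ∈ V n, d a ∈ V (n + 1))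
    (hdI : ∀ n, ∀ a ∈ I n, d a ∈ I (n + 1))
    (hdF : ∀ n, ∀ a ∈ F n, d a ∈ F (n + 1))
    (hgrade : ∀ (r s : ℤ), ∀ a ∈ V r, ∀ b ∈ V s, μ a b ∈ V (r + s))
    (hgradeI : ∀ (r s : ℤ), ∀ a ∈ I r, ∀ b ∈ I s, μ a b ∈ I (r + s))
    (hgradeF : ∀ (r s : ℤ), ∀ a ∈ F r, ∀ b ∈ F s, μ a b ∈ F (r + s))
    (hLeib : ∀ (r : ℤ), ∀ u ∈ V r, ∀ v : A,
      d (μ u v) = μ (d u) v + ((-1 : ℚ) ^ r) • μ u (d v)) :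
    ∀ (α : ℚ) (r s : ℤ) (x y : A × A × A), MemC I F V r x → MemC I F V s y →
      dCone d (cup μ α r x y) =
        cup μ α (r + 1) (dCone d x) y + ((-1 : ℚ) ^ r) • cup μ α r x (dCone d y) :=
  cup_leibniz_general V I F d μ hIV hFV hLeib
end

section
/- If the graded product on V^• is associative, then Beilinson's products ∪_0 and ∪_1 on the Deligne cone complex are associative: for α ∈ {0,1} and all x ∈ C^r, y ∈ C^s, z ∈ C^t, one has (x ∪_α y) ∪_α z = x ∪_α (y ∪_α z). -/
/-!
Setup: `(V, d)` is a cochain complex of `ℚ`-vector spaces indexed by `ℤ`, with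
subcomplexes `I, F ⊆ V`.  We model the graded pieces as submodules `V n, I n, F n`
of one ambient `ℚ`-vector space `A`, with one differential `d : A →ₗ[ℚ] A` that maps
`V n` into `V (n+1)` (and similarly for `I`, `F`).

Polynomials `ℚ[x] ⊗ V` with coefficients in `A` are modelled as finitely supported
functions `ℕ →₀ A`, where `p i` is the coefficient of `xⁱ`.
-/

variable {A : Type*} [AddCommGroup A] [Module ℚ A]

/-!
For `α ∈ {0, 1}` the third component of `x ∪_α y` has the shape `±(ℓ x) c' + c (ρ y)`, where
`ℓ` and `ρ` are the projections `(a, b, c) ↦ a` and `(a, b, c) ↦ b`, in one order or the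
other. Both projections are multiplicative for `∪_α`, so the two bracketings expand to the
same four terms, by associativity of `V` and `(-1)^(r+s) = (-1)^r (-1)^s`.
-/

noncomputable def coneMul (μ : A →ₗ[ℚ] A →ₗ[ℚ] A) (ℓ ρ : A × A × A → A) (r : ℤ)
    (x y : A × A × A) : A × A × A :=
  (μ x.1 y.1, μ x.2.1 y.2.1, (-1 : ℚ) ^ r • μ (ℓ x) y.2.2 + μ x.2.2 (ρ y))

theorem coneMul_snd_snd (μ : A →ₗ[ℚ] A →ₗ[ℚ] A) (ℓ ρ : A × A × A → A) (r : ℤ)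
    (x y : A × A × A) :
    (coneMul μ ℓ ρ r x y).2.2 = (-1 : ℚ) ^ r • μ (ℓ x) y.2.2 + μ x.2.2 (ρ y) :=
  rfl

theorem coneMul_assoc {μ : A →ₗ[ℚ] A →ₗ[ℚ] A} {ℓ ρ : A × A × A → A}
    (hassoc : ∀ a b c : A, μ (μ a b) c = μ a (μ b c))
    (hℓ : ∀ r x y, ℓ (coneMul μ ℓ ρ r x y) = μ (ℓ x) (ℓ y))
    (hρ : ∀ r x y, ρ (coneMul μ ℓ ρ r x y) = μ (ρ x) (ρ y))
    (r s : ℤ) (x y z : A × A × A) :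
    coneMul μ ℓ ρ (r + s) (coneMul μ ℓ ρ r x y) z =
      coneMul μ ℓ ρ r x (coneMul μ ℓ ρ s y z) := by
  refine Prod.ext (hassoc _ _ _) (Prod.ext (hassoc _ _ _) ?_)
  simp only [coneMul_snd_snd, hℓ, hρ, map_add, map_smul, LinearMap.add_apply,
    LinearMap.smul_apply, hassoc, zpow_add₀ (by norm_num : (-1 : ℚ) ≠ 0)]
  module

theorem cup_zero_eq_coneMul (μ : A →ₗ[ℚ] A →ₗ[ℚ] A) (r : ℤ) :
    cup μ 0 r = coneMul μ Prod.fst (fun y => y.2.1) r := by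
  ext x y <;> simp [cup, coneMul]

theorem cup_one_eq_coneMul (μ : A →ₗ[ℚ] A →ₗ[ℚ] A) (r : ℤ) :
    cup μ 1 r = coneMul μ (fun x => x.2.1) Prod.fst r := by
  ext x y <;> simp [cup, coneMul]

theorem cup_assoc_general
    (V I F : ℤ → Submodule ℚ A) (μ : A →ₗ[ℚ] A →ₗ[ℚ] A)
    (hassoc : ∀ a b c : A, μ (μ a b) c = μ a (μ b c)) :
    ∀ α : ℚ, (α = 0 ∨ α = 1) →
      ∀ (r s t : ℤ) (x y z : A × A × A),
        MemC I F V r x → MemC I F V s y → MemC I F V t z →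
        cup μ α (r + s) (cup μ α r x y) z = cup μ α r x (cup μ α s y z) := by
  rintro α (rfl | rfl) r s t x y z - - -
  · simp only [cup_zero_eq_coneMul]
    exact coneMul_assoc hassoc (fun _ _ _ => rfl) (fun _ _ _ => rfl) r s x y z
  · simp only [cup_one_eq_coneMul]
    exact coneMul_assoc hassoc (fun _ _ _ => rfl) (fun _ _ _ => rfl) r s x y z

/-- If the graded product on `V` is associative, then Beilinson's
products `∪_0` and `∪_1` are associative on the Deligne cone complex. -/
theorem cup_assoc
    (V I F : ℤ → Submodule ℚ A) (d : A →ₗ[ℚ] A) (μ : A →ₗ[ℚ] A →ₗ[ℚ] A)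
    (hd2 : ∀ a : A, d (d a) = 0)
    (hIV : ∀ n, I n ≤ V n) (hFV : ∀ n, F n ≤ V n)
    (hdV : ∀ n, ∀ a ∈ V n, d a ∈ V (n + 1))
    (hdI : ∀ n, ∀ a ∈ I n, d a ∈ I (n + 1))
    (hdF : ∀ n, ∀ a ∈ F n, d a ∈ F (n + 1))
    (hgrade : ∀ (r s : ℤ), ∀ a ∈ V r, ∀ b ∈ V s, μ a b ∈ V (r + s))
    (hgradeI : ∀ (r s : ℤ), ∀ a ∈ I r, ∀ b ∈ I s, μ a b ∈ I (r + s))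
    (hgradeF : ∀ (r s : ℤ), ∀ a ∈ F r, ∀ b ∈ F s, μ a b ∈ F (r + s))
    (hLeib : ∀ (r : ℤ), ∀ u ∈ V r, ∀ v : A,
      d (μ u v) = μ (d u) v + ((-1 : ℚ) ^ r) • μ u (d v))
    (hassoc : ∀ a b c : A, μ (μ a b) c = μ a (μ b c)) :
    ∀ α : ℚ, (α = 0 ∨ α = 1) →
      ∀ (r s t : ℤ) (x y z : A × A × A),
        MemC I F V r x → MemC I F V s y → MemC I F V t z →
        cup μ α (r + s) (cup μ α r x y) z = cup μ α r x (cup μ α s y z) :=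
  cup_assoc_general V I F μ hassoc
end

section
/- If the graded product on V^• is graded-commutative, i.e. uv = (−1)^{rs} vu for all u ∈ V^r and v ∈ V^s, then Beilinson's product for the parameter α = 1/2 is graded-commutative on the Deligne cone complex: for all x ∈ C^r and y ∈ C^s, x ∪_{1/2} y = (−1)^{rs} y ∪_{1/2} x. -/
/-!
Setup: `(V, d)` is a cochain complex of `ℚ`-vector spaces indexed by `ℤ`, with
subcomplexes `I, F ⊆ V`.  We model the graded pieces as submodules `V n, I n, F n`
of one ambient `ℚ`-vector space `A`, with one differential `d : A →ₗ[ℚ] A` that maps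
`V n` into `V (n+1)` (and similarly for `I`, `F`).

Polynomials `ℚ[x] ⊗ V` with coefficients in `A` are modelled as finitely supported
functions `ℕ →₀ A`, where `p i` is the coefficient of `xⁱ`.
-/

variable {A : Type*} [AddCommGroup A] [Module ℚ A]

/-!
For `α = 1/2` the `V`-component of `(a, b, c) ∪ (ã, b̃, c̃)` is
`½ ((-1)^r (a + b) c̃ + c (ã + b̃))`. Since `a + b ∈ Vʳ`, `c ∈ V^(r-1)`, `ã + b̃ ∈ Vˢ` and
`c̃ ∈ V^(s-1)`, graded commutativity of `V` turns each of the two terms into `(-1)^(rs)` times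
the corresponding term of `(ã, b̃, c̃) ∪ (a, b, c)`; the other two components commute directly.
-/

theorem neg_one_zpow_mul_zpow_mul_sub_one {K : Type*} [DivisionRing K] (r s : ℤ) :
    (-1 : K) ^ r * (-1) ^ (r * (s - 1)) = (-1) ^ (r * s) := by
  rw [← zpow_add₀ (neg_ne_zero.2 one_ne_zero)]
  ring_nf

theorem neg_one_zpow_sub_one_mul {K : Type*} [DivisionRing K] (r s : ℤ) :
    (-1 : K) ^ ((r - 1) * s) = (-1) ^ (r * s) * (-1) ^ s := by
  rw [sub_mul, one_mul, zpow_sub₀ (neg_ne_zero.2 one_ne_zero), div_eq_mul_inv, ← inv_zpow,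
    inv_neg_one]

theorem cup_half_snd_snd (μ : A →ₗ[ℚ] A →ₗ[ℚ] A) (r : ℤ) (x y : A × A × A) :
    (cup μ (1/2) r x y).2.2 =
      (1/2 : ℚ) • ((-1 : ℚ) ^ r • μ (x.1 + x.2.1) y.2.2 + μ x.2.2 (y.1 + y.2.1)) := by
  simp only [cup, map_add, LinearMap.add_apply]
  module

theorem cup_half_graded_comm_general
    (V I F : ℤ → Submodule ℚ A) (μ : A →ₗ[ℚ] A →ₗ[ℚ] A)
    (hIV : ∀ n, I n ≤ V n) (hFV : ∀ n, F n ≤ V n)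
    (hcomm : ∀ (r s : ℤ), ∀ u ∈ V r, ∀ v ∈ V s, μ u v = ((-1 : ℚ) ^ (r * s)) • μ v u) :
    ∀ (r s : ℤ) (x y : A × A × A), MemC I F V r x → MemC I F V s y →
      cup μ (1/2) r x y = ((-1 : ℚ) ^ (r * s)) • cup μ (1/2) s y x := by
  rintro r s ⟨a, b, c⟩ ⟨a', b', c'⟩ ⟨ha, hb, hc⟩ ⟨ha', hb', hc'⟩
  have hab : a + b ∈ V r := add_mem (hIV r ha) (hFV r hb)
  have hab' : a' + b' ∈ V s := add_mem (hIV s ha') (hFV s hb')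
  refine Prod.ext (hcomm r s a (hIV r ha) a' (hIV s ha'))
    (Prod.ext (hcomm r s b (hFV r hb) b' (hFV s hb')) ?_)
  rw [Prod.smul_snd, Prod.smul_snd, cup_half_snd_snd, cup_half_snd_snd,
    hcomm r (s - 1) _ hab _ hc', hcomm (r - 1) s _ hc _ hab', smul_smul, smul_smul,
    neg_one_zpow_mul_zpow_mul_sub_one, neg_one_zpow_sub_one_mul]
  module

/-- If the graded product on `V` is graded-commutative
(`u v = (-1)^(r s) • (v u)` for `u ∈ V^r`, `v ∈ V^s`), then Beilinson's product for the
parameter `α = 1/2` is graded-commutative on the Deligne cone complex: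
`x ∪ y = (-1)^(r s) • (y ∪ x)` for `x ∈ C^r`, `y ∈ C^s`. -/
theorem cup_half_graded_comm
    (V I F : ℤ → Submodule ℚ A) (d : A →ₗ[ℚ] A) (μ : A →ₗ[ℚ] A →ₗ[ℚ] A)
    (hd2 : ∀ a : A, d (d a) = 0)
    (hIV : ∀ n, I n ≤ V n) (hFV : ∀ n, F n ≤ V n)
    (hdV : ∀ n, ∀ a ∈ V n, d a ∈ V (n + 1))
    (hdI : ∀ n, ∀ a ∈ I n, d a ∈ I (n + 1))
    (hdF : ∀ n, ∀ a ∈ F n, d a ∈ F (n + 1))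
    (hgrade : ∀ (r s : ℤ), ∀ a ∈ V r, ∀ b ∈ V s, μ a b ∈ V (r + s))
    (hgradeI : ∀ (r s : ℤ), ∀ a ∈ I r, ∀ b ∈ I s, μ a b ∈ I (r + s))
    (hgradeF : ∀ (r s : ℤ), ∀ a ∈ F r, ∀ b ∈ F s, μ a b ∈ F (r + s))
    (hLeib : ∀ (r : ℤ), ∀ u ∈ V r, ∀ v : A,
      d (μ u v) = μ (d u) v + ((-1 : ℚ) ^ r) • μ u (d v))
    (hcomm : ∀ (r s : ℤ), ∀ u ∈ V r, ∀ v ∈ V s, μ u v = ((-1 : ℚ) ^ (r * s)) • μ v u) :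
    ∀ (r s : ℤ) (x y : A × A × A), MemC I F V r x → MemC I F V s y →
      cup μ (1/2) r x y = ((-1 : ℚ) ^ (r * s)) • cup μ (1/2) s y x :=
  cup_half_graded_comm_general V I F μ hIV hFV hcomm
end

section
/- Any two of Beilinson's products are chain homotopic, and in particular induce the same product on cohomology: for all α, β ∈ ℚ and all cocycles x = (a,b,c) ∈ C^r and y = (ã,b̃,c̃) ∈ C^s (i.e. dx = 0 and dy = 0), one has x ∪_α y − x ∪_β y = d(0, 0, (β−α)(−1)^r c c̃) in C^{r+s}. -/
/-!
Setup: `(V, d)` is a cochain complex of `ℚ`-vector spaces indexed by `ℤ`, with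
subcomplexes `I, F ⊆ V`.  We model the graded pieces as submodules `V n, I n, F n`
of one ambient `ℚ`-vector space `A`, with one differential `d : A →ₗ[ℚ] A` that maps
`V n` into `V (n+1)` (and similarly for `I`, `F`).

Polynomials `ℚ[x] ⊗ V` with coefficients in `A` are modelled as finitely supported
functions `ℕ →₀ A`, where `p i` is the coefficient of `xⁱ`.
-/

variable {A : Type*} [AddCommGroup A] [Module ℚ A]

/-!
Only the last components of `x ∪_α y` depend on `α`; their difference is
`(α-β)(-1)^r (b-a) c̃ + (β-α) c (b̃-ã)`. For cocycles `b - a = dc` and `b̃ - ã = dc̃`,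
and since `c` has degree `r - 1`, the Leibniz rule identifies this with `-(β-α)(-1)^r d(c c̃)`.
-/

theorem neg_one_zpow_mul_self {R : Type*} [DivisionRing R] (r : ℤ) :
    (-1 : R) ^ r * (-1 : R) ^ r = 1 := by
  rw [← zpow_add₀ (by norm_num), Even.neg_one_zpow ⟨r, rfl⟩]

theorem sub_eq_of_dCone_eq_zero {d : A →ₗ[ℚ] A} {x : A × A × A} (hx : dCone d x = 0) :
    x.2.1 - x.1 = d x.2.2 :=
  sub_eq_zero.mp (congrArg (fun z => z.2.2) hx)

theorem dCone_zero_zero (d : A →ₗ[ℚ] A) (c : A) : dCone d (0, 0, c) = (0, 0, -d c) := by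
  simp [dCone]

theorem cup_sub_cup (μ : A →ₗ[ℚ] A →ₗ[ℚ] A) (α β : ℚ) (r : ℤ) (x y : A × A × A) :
    cup μ α r x y - cup μ β r x y =
      (0, 0, ((α - β) * (-1 : ℚ) ^ r) • μ (x.2.1 - x.1) y.2.2 +
        (β - α) • μ x.2.2 (y.2.1 - y.1)) := by
  simp only [cup, Prod.mk_sub_mk, sub_self, map_sub, LinearMap.sub_apply]
  congr 2
  match_scalars <;> ring

theorem leibniz_of_mem_sub_one {V : ℤ → Submodule ℚ A} {d : A →ₗ[ℚ] A}
    {μ : A →ₗ[ℚ] A →ₗ[ℚ] A}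
    (hLeib : ∀ (r : ℤ), ∀ u ∈ V r, ∀ v : A,
      d (μ u v) = μ (d u) v + ((-1 : ℚ) ^ r) • μ u (d v))
    {r : ℤ} {c : A} (hc : c ∈ V (r - 1)) (v : A) :
    d (μ c v) = μ (d c) v - ((-1 : ℚ) ^ r) • μ c (d v) := by
  rw [hLeib (r - 1) c hc, zpow_sub_one₀ (by norm_num), inv_neg_one, mul_neg_one, neg_smul,
    sub_eq_add_neg]

theorem cup_homotopic_general
    (V I F : ℤ → Submodule ℚ A) (d : A →ₗ[ℚ] A) (μ : A →ₗ[ℚ] A →ₗ[ℚ] A)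
    (hLeib : ∀ (r : ℤ), ∀ u ∈ V r, ∀ v : A,
      d (μ u v) = μ (d u) v + ((-1 : ℚ) ^ r) • μ u (d v)) :
    ∀ (α β : ℚ) (r s : ℤ) (x y : A × A × A),
      MemC I F V r x → MemC I F V s y → dCone d x = 0 → dCone d y = 0 →
      cup μ α r x y - cup μ β r x y =
        dCone d ((0 : A), (0 : A), ((β - α) * (-1 : ℚ) ^ r) • μ x.2.2 y.2.2) := by
  intro α β r s x y hx _ hdx hdy
  rw [cup_sub_cup, dCone_zero_zero, sub_eq_of_dCone_eq_zero hdx, sub_eq_of_dCone_eq_zero hdy,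
    map_smul, leibniz_of_mem_sub_one hLeib hx.2.2]
  have hsq := neg_one_zpow_mul_self (R := ℚ) r
  congr 2
  match_scalars
  · ring
  · linear_combination (α - β) * hsq

/-- Any two of Beilinson's products are chain homotopic: for cocycles
`x = (a,b,c) ∈ C^r` and `y = (ã,b̃,c̃) ∈ C^s`,
`x ∪_α y - x ∪_β y = d (0, 0, (β-α)·(-1)^r • (c c̃))`.
In particular all products `∪_α` induce the same product on cohomology. -/
theorem cup_homotopic
    (V I F : ℤ → Submodule ℚ A) (d : A →ₗ[ℚ] A) (μ : A →ₗ[ℚ] A →ₗ[ℚ] A)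
    (hd2 : ∀ a : A, d (d a) = 0)
    (hIV : ∀ n, I n ≤ V n) (hFV : ∀ n, F n ≤ V n)
    (hdV : ∀ n, ∀ a ∈ V n, d a ∈ V (n + 1))
    (hdI : ∀ n, ∀ a ∈ I n, d a ∈ I (n + 1))
    (hdF : ∀ n, ∀ a ∈ F n, d a ∈ F (n + 1))
    (hgrade : ∀ (r s : ℤ), ∀ a ∈ V r, ∀ b ∈ V s, μ a b ∈ V (r + s))
    (hgradeI : ∀ (r s : ℤ), ∀ a ∈ I r, ∀ b ∈ I s, μ a b ∈ I (r + s))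
    (hgradeF : ∀ (r s : ℤ), ∀ a ∈ F r, ∀ b ∈ F s, μ a b ∈ F (r + s))
    (hLeib : ∀ (r : ℤ), ∀ u ∈ V r, ∀ v : A,
      d (μ u v) = μ (d u) v + ((-1 : ℚ) ^ r) • μ u (d v)) :
    ∀ (α β : ℚ) (r s : ℤ) (x y : A × A × A),
      MemC I F V r x → MemC I F V s y → dCone d x = 0 → dCone d y = 0 →
      cup μ α r x y - cup μ β r x y =
        dCone d ((0 : A), (0 : A), ((β - α) * (-1 : ℚ) ^ r) • μ x.2.2 y.2.2) :=
  cup_homotopic_general V I F d μ hLeib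
end

section
/- Let α and β be finite types and f : α → β a function. Consider the action of the group Perm(α) of permutations of α on the set of functions α → β given by σ · g := g ∘ σ⁻¹. Then the stabilizer of f under this action is a subgroup of Perm(α) of cardinality ∏_{b ∈ β} (|f⁻¹(b)|)!, the product over all b ∈ β of the factorials of the cardinalities of the fibers f⁻¹(b) = {a ∈ α : f(a) = b}. -/
/-- The action of the permutation group of `α` on functions `α → β`: `σ • g = g ∘ σ⁻¹`. -/
instance permArrowSMul {α β : Type*} : SMul (Equiv.Perm α) (α → β) :=
  ⟨fun σ g => g ∘ ⇑σ⁻¹⟩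

instance permArrowAction {α β : Type*} : MulAction (Equiv.Perm α) (α → β) where
  one_smul g := rfl
  mul_smul σ τ g := rfl

theorem mem_stabilizer_perm_iff_comp_eq {α β : Type*} {f : α → β} {σ : Equiv.Perm α} :
    σ ∈ MulAction.stabilizer (Equiv.Perm α) f ↔ f ∘ σ = f := by
  rw [← inv_mem_iff]
  rfl

/-- For finite types `α`, `β` and `f : α → β`, the stabilizer of `f`
under the action `σ • f = f ∘ σ⁻¹` of `Perm α` on `α → β` is a subgroup of `Perm α`
of cardinality `∏_{b : β} |f⁻¹(b)|!`. -/
theorem card_stabilizer_comp_perm {α β : Type*} [Fintype α] [Fintype β] (f : α → β) :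
    Nat.card (MulAction.stabilizer (Equiv.Perm α) f) =
      ∏ b : β, Nat.factorial (Nat.card {a : α // f a = b}) := by
  classical
  calc Nat.card (MulAction.stabilizer (Equiv.Perm α) f)
      = Fintype.card {σ : Equiv.Perm α // f ∘ σ = f} := by
        rw [← Nat.card_eq_fintype_card]
        exact Nat.card_congr (Equiv.subtypeEquivRight fun _ => mem_stabilizer_perm_iff_comp_eq)
    _ = ∏ b : β, Nat.factorial (Fintype.card {a : α // f a = b}) := DomMulAct.stabilizer_card f
    _ = ∏ b : β, Nat.factorial (Nat.card {a : α // f a = b}) := by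
        simp only [Nat.card_eq_fintype_card]
end

section
/- The improper Riemann/Lebesgue integral ∫_{−∞}^0 ( log(1−t)/(t(t−1)) + log(1−1/t)/(1−t) ) dt equals π²/3. (This is the term A = ∫_{−∞}^0 [log(1−z) d log(1−1/z) − log(1−1/z) d log(1−z)] in the computation of the regulator of the Totaro cycle at parameter a = 1.) -/
/-!
After `t = -u` the integrand becomes `g u = log (1 + u) / u - log u / (1 + u)` on `(0, ∞)`, which
is nonnegative and has the primitive `G u = 2 L u - log u * log (1 + u)`, where
`L u = ∫₀ᵘ log (1 + s) / s ds = -Li₂(-u)`. The integrand satisfies `g (1/u) / u² = g u`, so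
`G u + G (1/u)` is constant, equal to `2 G 1 = 4 L 1 = 4 · π²/12`; integrating the power series of
`log (1 + s) / s` termwise identifies `L 1` with `∑ (-1)ⁿ/(n+1)² = π²/12`. Since `G → 0` at `0⁺`,
this symmetry gives `G → π²/3` at `∞`, which is the value of the integral.
-/

open Real MeasureTheory Filter Set Topology

theorem hasSum_neg_one_pow_div_succ_sq :
    HasSum (fun n : ℕ => (-1 : ℝ) ^ n / ((n : ℝ) + 1) ^ 2) (π ^ 2 / 12) := by
  -- the Fourier series of the Bernoulli polynomial `B₂` at `x = 1/2`
  have h := (hasSum_one_div_nat_pow_mul_cos one_ne_zero (x := 1 / 2) (by norm_num)).neg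
  rw [← hasSum_nat_add_iff' 1] at h
  change HasSum _ (-(_ * bernoulliFun 2 (1 / 2)) - _) at h
  norm_num [bernoulliFun_two] at h
  convert h using 1
  · ext n
    have hcos : cos (2 * π * ((n : ℝ) + 1) * (1 / 2)) = (-1) ^ (n + 1) := by
      rw [← cos_nat_mul_pi]; push_cast; ring_nf
    rw [hcos]
    ring
  · ring

theorem hasSum_log_one_add_div_self {s : ℝ} (hs : |s| < 1) (hs0 : s ≠ 0) :
    HasSum (fun n : ℕ => (-1) ^ n * s ^ n / (n + 1)) (log (1 + s) / s) := by
  have h := (hasSum_pow_div_log_of_abs_lt_one (x := -s) (by rwa [abs_neg])).div_const (-s)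
  rw [sub_neg_eq_add, neg_div_neg_eq] at h
  refine h.congr_fun fun n => ?_
  rw [pow_succ, neg_pow]
  field_simp
  ring

theorem log_one_add_le_self {u : ℝ} (hu : -1 < u) : log (1 + u) ≤ u := by
  linarith [log_le_sub_one_of_pos (by linarith : 0 < 1 + u)]

theorem log_one_add_div_self_nonneg {s : ℝ} (hs : 0 ≤ s) : 0 ≤ log (1 + s) / s :=
  div_nonneg (log_nonneg (by linarith)) hs

theorem log_one_add_div_self_le_one {s : ℝ} (hs : 0 ≤ s) : log (1 + s) / s ≤ 1 := by
  rcases hs.eq_or_lt with rfl | hs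
  · simp
  · rw [div_le_one hs]
    exact log_one_add_le_self (by linarith)

theorem measurable_log_one_add_div_self : Measurable fun s : ℝ => log (1 + s) / s := by
  fun_prop

theorem intervalIntegrable_log_one_add_div_self {b : ℝ} (hb : 0 ≤ b) :
    IntervalIntegrable (fun s => log (1 + s) / s) volume 0 b := by
  rw [intervalIntegrable_iff_integrableOn_Ioc_of_le hb]
  refine Measure.integrableOn_of_bounded (M := 1) (by simp)
    measurable_log_one_add_div_self.aestronglyMeasurable ?_
  filter_upwards [ae_restrict_mem measurableSet_Ioc] with s hs
  rw [norm_of_nonneg (log_one_add_div_self_nonneg hs.1.le)]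
  exact log_one_add_div_self_le_one hs.1.le

theorem tendsto_log_mul_log_one_add_nhdsGT_zero :
    Tendsto (fun u => log u * log (1 + u)) (𝓝[>] 0) (𝓝 0) := by
  have h_mul_log : Tendsto (fun u => ‖u * log u‖) (𝓝[>] 0) (𝓝 0) := by
    simpa using (continuous_mul_log.tendsto 0).norm.mono_left nhdsWithin_le_nhds
  refine squeeze_zero_norm' (eventually_nhdsWithin_of_forall fun u (hu : 0 < u) => ?_) h_mul_log
  rw [norm_mul, norm_mul, mul_comm, norm_of_nonneg (log_nonneg (by linarith)),
    norm_of_nonneg hu.le]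
  gcongr
  exact log_one_add_le_self (by linarith)

namespace TotaroA

/-- `dilogNeg u = -Li₂(-u)`. -/
noncomputable def dilogNeg (u : ℝ) : ℝ := ∫ s in (0)..u, log (1 + s) / s

theorem dilogNeg_nonneg {u : ℝ} (hu : 0 ≤ u) : 0 ≤ dilogNeg u :=
  intervalIntegral.integral_nonneg hu fun _ hs => log_one_add_div_self_nonneg hs.1

theorem dilogNeg_le_self {u : ℝ} (hu : 0 ≤ u) : dilogNeg u ≤ u := by
  simpa [dilogNeg] using intervalIntegral.integral_mono_on hu
    (intervalIntegrable_log_one_add_div_self hu) intervalIntegrable_const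
    fun s hs => log_one_add_div_self_le_one hs.1

theorem hasDerivAt_dilogNeg {u : ℝ} (hu : 0 < u) : HasDerivAt dilogNeg (log (1 + u) / u) u :=
  intervalIntegral.integral_hasDerivAt_right (intervalIntegrable_log_one_add_div_self hu.le)
    measurable_log_one_add_div_self.aestronglyMeasurable.stronglyMeasurableAtFilter
    (by fun_prop (disch := positivity))

theorem tendsto_dilogNeg_nhdsGT_zero : Tendsto dilogNeg (𝓝[>] 0) (𝓝 0) :=
  squeeze_zero' (eventually_nhdsWithin_of_forall fun _ hu => dilogNeg_nonneg (le_of_lt hu))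
    (eventually_nhdsWithin_of_forall fun _ hu => dilogNeg_le_self (le_of_lt hu))
    nhdsWithin_le_nhds

theorem dilogNeg_one : dilogNeg 1 = π ^ 2 / 12 := by
  set F : ℕ → ℝ → ℝ := fun n s => (-1) ^ n * s ^ n / (n + 1)
  have integral_monomial (n : ℕ) : ∫ s in Ioo (0 : ℝ) 1, s ^ n / (n + 1) = 1 / (n + 1) ^ 2 := by
    rw [← integral_Ioc_eq_integral_Ioo, ← intervalIntegral.integral_of_le zero_le_one,
      intervalIntegral.integral_div, integral_pow]
    field_simp
    simp
  have hF_int (n : ℕ) : IntegrableOn (F n) (Ioo 0 1) :=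
    (by fun_prop : Continuous (F n)).integrableOn_Icc.mono_set Ioo_subset_Icc_self
  have integral_F (n : ℕ) : ∫ s in Ioo (0 : ℝ) 1, F n s = (-1) ^ n / (n + 1) ^ 2 := by
    simp only [F, mul_div_assoc, integral_const_mul, integral_monomial]
    ring
  have integral_norm_F (n : ℕ) : ∫ s in Ioo (0 : ℝ) 1, ‖F n s‖ = 1 / (n + 1) ^ 2 := by
    rw [← integral_monomial]
    refine setIntegral_congr_fun measurableSet_Ioo fun s hs => ?_
    rw [norm_div, norm_mul, norm_pow, norm_pow, norm_neg, norm_one, one_pow, one_mul,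
      norm_of_nonneg hs.1.le, norm_of_nonneg (by positivity)]
  have h_termwise := hasSum_integral_of_summable_integral_norm hF_int
    ((summable_nat_add_iff 1).2 (summable_one_div_nat_pow.2 one_lt_two) |>.congr fun n => by
      rw [integral_norm_F]; push_cast; rfl)
  have h_series : ∫ s in Ioo (0 : ℝ) 1, ∑' n, F n s = dilogNeg 1 := by
    rw [dilogNeg, intervalIntegral.integral_of_le zero_le_one, integral_Ioc_eq_integral_Ioo]
    refine setIntegral_congr_fun measurableSet_Ioo fun s hs => ?_
    exact (hasSum_log_one_add_div_self (by rw [abs_of_pos hs.1]; exact hs.2) hs.1.ne').tsum_eq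
  rw [h_series] at h_termwise
  simp only [integral_F] at h_termwise
  exact h_termwise.unique hasSum_neg_one_pow_div_succ_sq

noncomputable def integrand (u : ℝ) : ℝ := log (1 + u) / u - log u / (1 + u)

noncomputable def primitive (u : ℝ) : ℝ := 2 * dilogNeg u - log u * log (1 + u)

theorem integrand_nonneg {u : ℝ} (hu : 0 < u) : 0 ≤ integrand u := by
  rw [integrand, sub_nonneg, div_le_div_iff₀ (by positivity) hu]
  rcases le_total u 1 with h | h
  · nlinarith [log_nonpos hu.le h, log_nonneg (by linarith : 1 ≤ 1 + u)]
  · nlinarith [log_nonneg h, log_le_log hu (by linarith : u ≤ 1 + u)]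

theorem integrand_inv_div_sq {u : ℝ} (hu : 0 < u) : integrand u⁻¹ / u ^ 2 = integrand u := by
  have h : log (1 + u⁻¹) = log (1 + u) - log u := by
    rw [← log_div (by positivity) hu.ne']
    congr 1
    field_simp
    ring
  rw [integrand, integrand, h, log_inv]
  field_simp
  ring

theorem hasDerivAt_primitive {u : ℝ} (hu : 0 < u) : HasDerivAt primitive (integrand u) u := by
  have h := ((hasDerivAt_dilogNeg hu).const_mul 2).sub
    ((hasDerivAt_log hu.ne').mul (((hasDerivAt_id u).const_add 1).log (by positivity)))
  refine h.congr_deriv ?_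
  simp only [integrand, id]
  field_simp
  ring

theorem primitive_add_primitive_inv {u : ℝ} (hu : 0 < u) :
    primitive u + primitive u⁻¹ = π ^ 2 / 3 := by
  have hderiv (x : ℝ) (hx : 0 < x) : HasDerivAt (fun x => primitive x + primitive x⁻¹) 0 x := by
    refine ((hasDerivAt_primitive hx).add
      ((hasDerivAt_primitive (inv_pos.2 hx)).comp x (hasDerivAt_inv hx.ne'))).congr_deriv ?_
    rw [← integrand_inv_div_sq hx]
    ring
  have hconst := isOpen_Ioi.is_const_of_deriv_eq_zero isPreconnected_Ioi
    (fun x hx => (hderiv x hx).differentiableAt.differentiableWithinAt)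
    (fun x hx => (hderiv x hx).deriv) hu (mem_Ioi.2 one_pos)
  rw [hconst, inv_one, primitive, dilogNeg_one, log_one]
  ring

theorem primitive_zero : primitive 0 = 0 := by
  simp [primitive, dilogNeg]

theorem tendsto_primitive_nhdsGT_zero : Tendsto primitive (𝓝[>] 0) (𝓝 0) := by
  have h := (tendsto_dilogNeg_nhdsGT_zero.const_mul 2).sub tendsto_log_mul_log_one_add_nhdsGT_zero
  rw [mul_zero, sub_zero] at h
  exact h

theorem tendsto_primitive_atTop : Tendsto primitive atTop (𝓝 (π ^ 2 / 3)) := by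
  have h := (tendsto_primitive_nhdsGT_zero.comp tendsto_inv_atTop_nhdsGT_zero).const_sub (π ^ 2 / 3)
  rw [sub_zero] at h
  refine h.congr' ?_
  filter_upwards [eventually_gt_atTop 0] with u hu
  simp [← primitive_add_primitive_inv hu]

theorem integral_integrand : ∫ u in Ioi 0, integrand u = π ^ 2 / 3 := by
  have hcont : ContinuousWithinAt primitive (Ici 0) 0 := by
    rw [← Ioi_insert, continuousWithinAt_insert_self, ContinuousWithinAt, primitive_zero]
    exact tendsto_primitive_nhdsGT_zero
  rw [integral_Ioi_of_hasDerivAt_of_nonneg hcont (fun _ hu => hasDerivAt_primitive hu)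
    (fun _ hu => integrand_nonneg hu) tendsto_primitive_atTop, primitive_zero, sub_zero]

theorem integrand_eq_of_neg {u : ℝ} (hu : 0 < u) :
    log (1 - -u) / (-u * (-u - 1)) + log (1 - 1 / -u) / (1 - -u) = integrand u := by
  have h : log (1 - 1 / -u) = log (1 + u) - log u := by
    rw [← log_div (by positivity) hu.ne']
    congr 1
    field_simp
    ring
  rw [h, integrand, sub_neg_eq_add, show -u * (-u - 1) = u * (1 + u) by ring]
  field_simp
  ring

end TotaroA

/-- The improper integral
`∫_{-∞}^0 (log(1-t)/(t(t-1)) + log(1-1/t)/(1-t)) dt = π²/3`; this is the term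
`A = ∫_{-∞}^0 [log(1-z) d log(1-1/z) - log(1-1/z) d log(1-z)]` in the computation of
the regulator of the Totaro cycle at the parameter `a = 1`. -/
theorem integral_totaro_A :
    ∫ t in Set.Iio (0 : ℝ),
        (Real.log (1 - t) / (t * (t - 1)) + Real.log (1 - 1 / t) / (1 - t)) =
      Real.pi ^ 2 / 3 := by
  rw [← integral_Iic_eq_integral_Iio, ← neg_zero, ← integral_comp_neg_Ioi,
    ← TotaroA.integral_integrand]
  exact setIntegral_congr_fun measurableSet_Ioi fun u hu => TotaroA.integrand_eq_of_neg hu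
end

section
/- The improper Riemann/Lebesgue integral ∫₁^∞ ( log t/(t(t−1)) − log(1−1/t)/t ) dt equals π²/3. (This is the term C = ∫_∞^1 [log(1−1/z) d log z − log z d log(1−1/z)], with orientation reversed, in the computation of the regulator of the Totaro cycle at parameter a = 1.) -/
/-!
Expanding `1/(t-1) = ∑ t⁻ⁿ⁻¹` and `-log(1-1/t) = ∑ t⁻ⁿ⁻¹/(n+1)`, the integrand is the sum of the
nonnegative functions `(log t + 1/(n+1)) / t^(n+2)`, whose integral over `(1, ∞)` is `2/(n+1)^2`.
Integrating term by term gives `2 ζ(2) = π²/3`.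
-/

open Real MeasureTheory Set Filter Topology

namespace TotaroC

noncomputable def seriesTerm (n : ℕ) (t : ℝ) : ℝ := (log t + 1 / (n + 1)) / t ^ (n + 2)

noncomputable def seriesTermPrimitive (n : ℕ) (t : ℝ) : ℝ :=
  -(((n : ℝ) + 1) * log t + 2) / (((n : ℝ) + 1) ^ 2 * t ^ (n + 1))

lemma hasDerivAt_seriesTermPrimitive (n : ℕ) {x : ℝ} (hx : 0 < x) :
    HasDerivAt (seriesTermPrimitive n) (seriesTerm n x) x := by
  have hnum : HasDerivAt (fun t ↦ -(((n : ℝ) + 1) * log t + 2)) (-(((n : ℝ) + 1) * x⁻¹)) x :=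
    (((hasDerivAt_log hx.ne').const_mul _).add_const 2).neg
  have hden : HasDerivAt (fun t ↦ ((n : ℝ) + 1) ^ 2 * t ^ (n + 1))
      (((n : ℝ) + 1) ^ 2 * ((n + 1 : ℕ) * x ^ n)) x :=
    (hasDerivAt_pow (n + 1) x).const_mul _
  refine (hnum.div hden (by positivity)).congr_deriv ?_
  unfold seriesTerm
  field_simp
  push_cast
  ring

lemma seriesTerm_nonneg (n : ℕ) {x : ℝ} (hx : 1 ≤ x) : 0 ≤ seriesTerm n x := by
  have := log_nonneg hx
  have : 0 < x := one_pos.trans_le hx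
  unfold seriesTerm
  positivity

lemma tendsto_seriesTermPrimitive_atTop (n : ℕ) :
    Tendsto (seriesTermPrimitive n) atTop (𝓝 0) := by
  have hlog : Tendsto (fun x : ℝ ↦ log x / x ^ (n + 1)) atTop (𝓝 0) := by
    simpa only [rpow_natCast] using
      (isLittleO_log_rpow_atTop (r := (n + 1 : ℕ)) (by positivity)).tendsto_div_nhds_zero
  have hinv : Tendsto (fun x : ℝ ↦ (x ^ (n + 1))⁻¹) atTop (𝓝 0) :=
    (tendsto_pow_atTop n.succ_ne_zero).inv_tendsto_atTop
  have hlim :=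
    (hlog.const_mul (-1 / ((n : ℝ) + 1))).add (hinv.const_mul (-2 / ((n : ℝ) + 1) ^ 2))
  rw [mul_zero, mul_zero, add_zero] at hlim
  refine hlim.congr' ?_
  filter_upwards [eventually_gt_atTop 0] with x hx
  unfold seriesTermPrimitive
  field_simp
  ring

lemma integrableOn_seriesTerm (n : ℕ) : IntegrableOn (seriesTerm n) (Ioi 1) :=
  integrableOn_Ioi_deriv_of_nonneg'
    (fun _ hx ↦ hasDerivAt_seriesTermPrimitive n (one_pos.trans_le hx))
    (fun _ hx ↦ seriesTerm_nonneg n hx.le) (tendsto_seriesTermPrimitive_atTop n)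

lemma integral_seriesTerm (n : ℕ) : ∫ t in Ioi 1, seriesTerm n t = 2 / ((n : ℝ) + 1) ^ 2 := by
  rw [integral_Ioi_of_hasDerivAt_of_nonneg'
    (fun _ hx ↦ hasDerivAt_seriesTermPrimitive n (one_pos.trans_le hx))
    (fun _ hx ↦ seriesTerm_nonneg n hx.le) (tendsto_seriesTermPrimitive_atTop n)]
  simp only [seriesTermPrimitive, log_one, mul_zero, zero_add, one_pow, mul_one, zero_sub]
  ring

lemma hasSum_seriesTerm {t : ℝ} (ht : 1 < t) :
    HasSum (fun n ↦ seriesTerm n t) (log t / (t * (t - 1)) - log (1 - 1 / t) / t) := by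
  have ht0 : 0 < t := one_pos.trans ht
  have hr0 : 0 ≤ 1 / t := by positivity
  have hr1 : 1 / t < 1 := (div_lt_one ht0).2 ht
  have hgeom := (hasSum_geometric_of_lt_one hr0 hr1).mul_left (log t / t ^ 2)
  have hlog := (hasSum_pow_div_log_of_abs_lt_one (abs_of_nonneg hr0 ▸ hr1)).div_const t
  have hterm (n : ℕ) : log t / t ^ 2 * (1 / t) ^ n + (1 / t) ^ (n + 1) / (n + 1) / t =
      seriesTerm n t := by
    rw [one_div_pow, one_div_pow, seriesTerm]
    field_simp
    ring
  have hval : log t / t ^ 2 * (1 - 1 / t)⁻¹ + -log (1 - 1 / t) / t =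
      log t / (t * (t - 1)) - log (1 - 1 / t) / t := by
    have : t - 1 ≠ 0 := sub_ne_zero.2 ht.ne'
    field_simp
    ring
  simpa only [hterm, hval] using hgeom.add hlog

lemma hasSum_two_div_sq_nat_add_one :
    HasSum (fun n : ℕ ↦ 2 / ((n : ℝ) + 1) ^ 2) (π ^ 2 / 3) := by
  rw [show π ^ 2 / 3 = 2 * (π ^ 2 / 6) by ring]
  simpa [div_eq_mul_inv] using ((hasSum_nat_add_iff' 1).2 hasSum_zeta_two).mul_left 2

end TotaroC

open TotaroC in
/-- The improper integral
`∫₁^∞ (log t/(t(t-1)) - log(1-1/t)/t) dt = π²/3`; this is the term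
`C = ∫_∞^1 [log(1-1/z) d log z - log z d log(1-1/z)]`, with orientation reversed, in the
computation of the regulator of the Totaro cycle at the parameter `a = 1`. -/
theorem integral_totaro_C :
    ∫ t in Set.Ioi (1 : ℝ),
        (Real.log t / (t * (t - 1)) - Real.log (1 - 1 / t) / t) =
      Real.pi ^ 2 / 3 := by
  have hnorm (n : ℕ) : ∫ t in Ioi 1, ‖seriesTerm n t‖ = 2 / ((n : ℝ) + 1) ^ 2 := by
    rw [← integral_seriesTerm n]
    exact setIntegral_congr_fun measurableSet_Ioi
      fun t ht ↦ norm_of_nonneg (seriesTerm_nonneg n ht.le)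
  have hsum := hasSum_integral_of_summable_integral_norm integrableOn_seriesTerm
    (by simpa only [hnorm] using hasSum_two_div_sq_nat_add_one.summable)
  simp only [integral_seriesTerm] at hsum
  rw [hasSum_two_div_sq_nat_add_one.unique hsum]
  exact setIntegral_congr_fun measurableSet_Ioi fun t ht ↦ (hasSum_seriesTerm ht).tsum_eq.symm
end
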